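/- arXiv:math/0610386 — 6 statements merged into one kernel-verified Lean document; each statement's English description precedes it below -/
import Mathlib

section
/- For each t ∈ [0,T], the identity Q_{T-t} = Q_T^{1/2} (I − V_t V_t^*) Q_T^{1/2} holds, where V_t = Q_T^{-1/2} S_{T-t} Q_t^{1/2}. -/
open ContinuousLinearMap

section Factorization

variable {𝕜 E F : Type*} [RCLike 𝕜]
  [NormedAddCommGroup E] [InnerProductSpace 𝕜 E] [CompleteSpace E]
  [NormedAddCommGroup F] [InnerProductSpace 𝕜 F] [CompleteSpace F]
  {R : F →L[𝕜] F} {P : E →L[𝕜] E} {V A : E →L[𝕜] F}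

theorem adjoint_comp_eq_of_comp_eq (hR : IsSelfAdjoint R) (hP : IsSelfAdjoint P)
    (h : R.comp V = A.comp P) : (adjoint V).comp R = P.comp (adjoint A) := by
  simpa only [adjoint_comp, hR.adjoint_eq, hP.adjoint_eq] using congrArg adjoint h

theorem comp_comp_adjoint_comp_eq_of_comp_eq (hR : IsSelfAdjoint R) (hP : IsSelfAdjoint P)
    (h : R.comp V = A.comp P) :
    R.comp ((V.comp (adjoint V)).comp R) = A.comp ((P.comp P).comp (adjoint A)) :=
  calc R.comp ((V.comp (adjoint V)).comp R)
      = (R.comp V).comp ((adjoint V).comp R) := by simp only [comp_assoc]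
    _ = (A.comp P).comp (P.comp (adjoint A)) := by
        rw [h, adjoint_comp_eq_of_comp_eq hR hP h]
    _ = A.comp ((P.comp P).comp (adjoint A)) := by simp only [comp_assoc]

end Factorization

theorem QTmt_eq_QThalf_one_sub_VtVtstar_QThalf_general
    {H : Type*} [NormedAddCommGroup H] [InnerProductSpace ℝ H] [CompleteSpace H]
    {t T : ℝ}
    (S : ℝ → H →L[ℝ] H)
    (Qt QTmt QT Qthalf QThalf Vt : H →L[ℝ] H)
    (hQthalf_sa : IsSelfAdjoint Qthalf) (hQThalf_sa : IsSelfAdjoint QThalf)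
    (hQthalf_sq : Qthalf.comp Qthalf = Qt) (hQThalf_sq : QThalf.comp QThalf = QT)
    (hVt : QThalf.comp Vt = (S (T - t)).comp Qthalf)
    (hid : QT = QTmt + (S (T - t)).comp (Qt.comp (ContinuousLinearMap.adjoint (S (T - t))))) :
    QTmt = QThalf.comp
      (((1 : H →L[ℝ] H) - Vt.comp (ContinuousLinearMap.adjoint Vt)).comp QThalf) := by
  rw [sub_comp, comp_sub, one_def, id_comp, hQThalf_sq,
    comp_comp_adjoint_comp_eq_of_comp_eq hQThalf_sa hQthalf_sa hVt, hQthalf_sq, hid,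
    add_sub_cancel_right]

/-- For `t ∈ [0,T]`, `Q_{T-t} = Q_T^{1/2} (I − V_t V_t^*) Q_T^{1/2}`,
where `V_t = Q_T^{-1/2} S_{T-t} Q_t^{1/2}` (i.e. `Q_T^{1/2} V_t = S_{T-t} Q_t^{1/2}`). -/
theorem QTmt_eq_QThalf_one_sub_VtVtstar_QThalf
    {H : Type*} [NormedAddCommGroup H] [InnerProductSpace ℝ H] [CompleteSpace H]
    {t T : ℝ} (ht : 0 ≤ t) (htT : t ≤ T)
    (S : ℝ → H →L[ℝ] H)
    (Qt QTmt QT Qthalf QThalf Vt : H →L[ℝ] H)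
    (hQthalf_sa : IsSelfAdjoint Qthalf) (hQThalf_sa : IsSelfAdjoint QThalf)
    (hQthalf_sq : Qthalf.comp Qthalf = Qt) (hQThalf_sq : QThalf.comp QThalf = QT)
    (hVt : QThalf.comp Vt = (S (T - t)).comp Qthalf)
    (hid : QT = QTmt + (S (T - t)).comp (Qt.comp (ContinuousLinearMap.adjoint (S (T - t)))))
    (hQT_inj : Function.Injective QThalf) :
    QTmt = QThalf.comp
      (((1 : H →L[ℝ] H) - Vt.comp (ContinuousLinearMap.adjoint Vt)).comp QThalf) :=
  QTmt_eq_QThalf_one_sub_VtVtstar_QThalf_general S Qt QTmt QT Qthalf QThalf Vt hQthalf_sa hQThalf_sa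
    hQthalf_sq hQThalf_sq hVt hid
end

section
/- The operator V_t = Q_T^{-1/2} S_{T-t} Q_t^{1/2} is a contraction: ‖V_t‖ ≤ 1 for all t ∈ (0,T). -/
/-!
Taking adjoints in `Q_T^{1/2} V_t = S_{T-t} Q_t^{1/2}` gives
`V_t^* Q_T^{1/2} = Q_t^{1/2} S_{T-t}^*`, so `‖V_t^* Q_T^{1/2} x‖² = ⟪Q_t S_{T-t}^* x, S_{T-t}^* x⟫`,
which the identity `Q_T = Q_{T-t} + S_{T-t} Q_t S_{T-t}^*` bounds by `⟪Q_T x, x⟫ = ‖Q_T^{1/2} x‖²`.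
Thus `V_t^*` is contractive on the dense range of `Q_T^{1/2}`, hence everywhere,
and `‖V_t‖ = ‖V_t^*‖`.
-/

open ContinuousLinearMap
open scoped RealInnerProductSpace InnerProduct

namespace ContinuousLinearMap

theorem opNorm_le_of_denseRange {𝕜 E F G : Type*} [NontriviallyNormedField 𝕜]
    [SeminormedAddCommGroup F] [NormedSpace 𝕜 F] [SeminormedAddCommGroup G] [NormedSpace 𝕜 G]
    {A : F →L[𝕜] G} {R : E → F} (hR : DenseRange R) {C : ℝ} (hC : 0 ≤ C)
    (h : ∀ x, ‖A (R x)‖ ≤ C * ‖R x‖) : ‖A‖ ≤ C := by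
  refine A.opNorm_le_bound hC fun y => hR.induction_on y ?_ h
  exact isClosed_le (continuous_norm.comp A.continuous) (continuous_norm.const_mul C)

variable {E F : Type*} [NormedAddCommGroup E] [InnerProductSpace ℝ E] [CompleteSpace E]
  [NormedAddCommGroup F] [InnerProductSpace ℝ F] [CompleteSpace F]

theorem norm_sq_apply_eq_inner_of_comp_self {R A : E →L[ℝ] E} (hR : IsSelfAdjoint R)
    (hRA : R ∘L R = A) (x : E) : ‖R x‖ ^ 2 = ⟪A x, x⟫ := by
  rw [apply_norm_sq_eq_inner_adjoint_left, hR.adjoint_eq, hRA]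
  rfl

theorem inner_comp_comp_adjoint_apply (S : E →L[ℝ] F) (Q : E →L[ℝ] E) (x : F) :
    ⟪(S ∘L Q ∘L S†) x, x⟫ = ⟪Q ((S†) x), (S†) x⟫ := by
  rw [comp_apply, comp_apply, ← adjoint_inner_right]

theorem inner_apply_adjoint_le_of_eq_add {S : E →L[ℝ] F} {Q : E →L[ℝ] E} {QT P : F →L[ℝ] F}
    (hP : ∀ x, 0 ≤ ⟪P x, x⟫) (hQT : QT = P + S ∘L Q ∘L S†) (x : F) :
    ⟪Q ((S†) x), (S†) x⟫ ≤ ⟪QT x, x⟫ := by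
  rw [hQT, add_apply, inner_add_left, inner_comp_comp_adjoint_apply]
  linarith [hP x]

end ContinuousLinearMap

theorem Vt_contraction_general
    {H : Type*} [NormedAddCommGroup H] [InnerProductSpace ℝ H] [CompleteSpace H]
    {t T : ℝ}
    (S : ℝ → H →L[ℝ] H)
    (Qt QTmt QT Qthalf QThalf Vt : H →L[ℝ] H)
    (hQthalf_sa : IsSelfAdjoint Qthalf) (hQThalf_sa : IsSelfAdjoint QThalf)
    (hQthalf_sq : Qthalf.comp Qthalf = Qt) (hQThalf_sq : QThalf.comp QThalf = QT)
    (hQTmt_pos : ∀ x : H, 0 ≤ ⟪QTmt x, x⟫)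
    (hid : QT = QTmt + (S (T - t)).comp (Qt.comp (ContinuousLinearMap.adjoint (S (T - t)))))
    (hVt : QThalf.comp Vt = (S (T - t)).comp Qthalf)
    (hQThalf_dense : DenseRange QThalf) :
    ‖Vt‖ ≤ 1 := by
  have hadj : Vt† ∘L QThalf = Qthalf ∘L (S (T - t))† := by
    simpa only [adjoint_comp, hQthalf_sa.adjoint_eq, hQThalf_sa.adjoint_eq]
      using congrArg adjoint hVt
  have hsq (x : H) : ‖(Vt† ∘L QThalf) x‖ ^ 2 ≤ ‖QThalf x‖ ^ 2 := by
    rw [hadj, comp_apply, norm_sq_apply_eq_inner_of_comp_self hQthalf_sa hQthalf_sq,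
      norm_sq_apply_eq_inner_of_comp_self hQThalf_sa hQThalf_sq]
    exact inner_apply_adjoint_le_of_eq_add hQTmt_pos hid x
  rw [← adjoint.norm_map Vt]
  refine opNorm_le_of_denseRange hQThalf_dense zero_le_one fun x => ?_
  rw [one_mul]
  exact le_of_pow_le_pow_left₀ two_ne_zero (norm_nonneg _) (hsq x)

/-- The operator `V_t = Q_T^{-1/2} S_{T-t} Q_t^{1/2}` is a contraction: `‖V_t‖ ≤ 1`
for `t ∈ (0,T)`.  Here `Q_T = Q_{T-t} + S_{T-t} Q_t S_{T-t}^*` with `Q_{T-t} ≥ 0`. -/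
theorem Vt_contraction
    {H : Type*} [NormedAddCommGroup H] [InnerProductSpace ℝ H] [CompleteSpace H]
    {t T : ℝ} (ht : 0 < t) (htT : t < T)
    (S : ℝ → H →L[ℝ] H)
    (Qt QTmt QT Qthalf QThalf Vt : H →L[ℝ] H)
    (hQthalf_sa : IsSelfAdjoint Qthalf) (hQThalf_sa : IsSelfAdjoint QThalf)
    (hQthalf_sq : Qthalf.comp Qthalf = Qt) (hQThalf_sq : QThalf.comp QThalf = QT)
    (hQTmt_pos : ∀ x : H, 0 ≤ ⟪QTmt x, x⟫)
    (hid : QT = QTmt + (S (T - t)).comp (Qt.comp (ContinuousLinearMap.adjoint (S (T - t)))))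
    (hVt : QThalf.comp Vt = (S (T - t)).comp Qthalf)
    (hQThalf_inj : Function.Injective QThalf) (hQThalf_dense : DenseRange QThalf) :
    ‖Vt‖ ≤ 1 :=
  Vt_contraction_general S Qt QTmt QT Qthalf QThalf Vt hQthalf_sa hQThalf_sa hQthalf_sq hQThalf_sq
    hQTmt_pos hid hVt hQThalf_dense
end

section
/- If ‖V_t‖ < 1, then I − V_t V_t^* is an isomorphism of H and im(Q_{T-t}^{1/2}) = im(Q_T^{1/2}). -/
/-!
Write `S = Q_{T-t}^{1/2}`, `T = Q_T^{1/2}`, `V = V_t`. From `S² = T (1 - V V*) T` and self-adjointness,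
`‖S x‖² = ‖T x‖² - ‖V* T x‖²`, hence `(1 - ‖V‖²) ‖T x‖² ≤ ‖S x‖² ≤ ‖T x‖²`. Douglas' lemma turns
each of these norm dominations into a range inclusion. Invertibility of `1 - V V*` is the Neumann
series, because `‖V V*‖ = ‖V‖² < 1`.
-/

open ContinuousLinearMap

open scoped InnerProductSpace

section Douglas

variable {𝕜 E F G : Type*} [RCLike 𝕜]
  [NormedAddCommGroup E] [InnerProductSpace 𝕜 E] [CompleteSpace E]
  [NormedAddCommGroup F] [InnerProductSpace 𝕜 F] [CompleteSpace F]
  [NormedAddCommGroup G] [InnerProductSpace 𝕜 G] [CompleteSpace G]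

theorem range_subset_range_of_norm_adjoint_le (A : E →L[𝕜] G) (B : F →L[𝕜] G) (c : ℝ)
    (h : ∀ x, ‖adjoint A x‖ ≤ c * ‖adjoint B x‖) : Set.range A ⊆ Set.range B := by
  rintro _ ⟨u, rfl⟩
  -- `B* x ↦ ⟪A u, x⟫` is a well-defined bounded functional on the range of `B*`; a Hahn–Banach
  -- extension of it, represented by Riesz as `⟪v, ·⟫`, gives `⟪B v, x⟫ = ⟪A u, x⟫` for all `x`.
  have hker : LinearMap.ker (adjoint B : G →ₗ[𝕜] F) ≤ LinearMap.ker (innerₛₗ 𝕜 (A u)) := by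
    intro x hx
    have : adjoint A x = 0 := norm_le_zero_iff.mp (by simpa [show adjoint B x = 0 from hx] using h x)
    simp [← adjoint_inner_right, this]
  let φ : LinearMap.range (adjoint B : G →ₗ[𝕜] F) →ₗ[𝕜] 𝕜 :=
    (LinearMap.ker _).liftQ _ hker ∘ₗ (adjoint B : G →ₗ[𝕜] F).quotKerEquivRange.symm
  have hφ : ∀ x, φ ⟨adjoint B x, LinearMap.mem_range_self _ x⟩ = ⟪A u, x⟫_𝕜 := fun x => by
    have := LinearMap.quotKerEquivRange_symm_apply_image (adjoint B : G →ₗ[𝕜] F) x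
      (LinearMap.mem_range_self _ x)
    simp only [φ, LinearMap.comp_apply, LinearEquiv.coe_coe, coe_coe] at this ⊢
    rw [this]
    simp
  have hφ_bound : ∀ z, ‖φ z‖ ≤ c * ‖u‖ * ‖z‖ := by
    rintro ⟨_, x, rfl⟩
    calc ‖φ ⟨adjoint B x, _⟩‖ = ‖⟪u, adjoint A x⟫_𝕜‖ := by rw [hφ, adjoint_inner_right]
      _ ≤ ‖u‖ * (c * ‖adjoint B x‖) := (norm_inner_le_norm _ _).trans (by gcongr; exact h x)
      _ = c * ‖u‖ * ‖adjoint B x‖ := by ring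
  obtain ⟨g, hg, -⟩ := exists_extension_norm_eq _ (φ.mkContinuous _ hφ_bound)
  refine ⟨(InnerProductSpace.toDual 𝕜 F).symm g, ext_inner_right 𝕜 fun x => ?_⟩
  rw [← adjoint_inner_right, InnerProductSpace.toDual_symm_apply,
    hg ⟨adjoint B x, LinearMap.mem_range_self _ x⟩, LinearMap.mkContinuous_apply, hφ]

end Douglas

section

variable {𝕜 H : Type*} [RCLike 𝕜] [NormedAddCommGroup H] [InnerProductSpace 𝕜 H] [CompleteSpace H]

theorem norm_comp_adjoint_lt_one {V : H →L[𝕜] H} (hV : ‖V‖ < 1) : ‖V ∘L adjoint V‖ < 1 := by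
  have : ‖V ∘L adjoint V‖ = ‖V‖ * ‖V‖ := CStarRing.norm_self_mul_star
  nlinarith [norm_nonneg V]

theorem re_inner_one_sub_comp_adjoint_apply_self (V : H →L[𝕜] H) (y : H) :
    RCLike.re ⟪(1 - V ∘L adjoint V) y, y⟫_𝕜 = ‖y‖ ^ 2 - ‖adjoint V y‖ ^ 2 := by
  rw [apply_norm_sq_eq_inner_adjoint_left, adjoint_adjoint, sub_apply, inner_sub_left, map_sub,
    one_apply_eq_self, inner_self_eq_norm_sq]

theorem norm_sq_apply_eq_of_comp_self_eq {S T V : H →L[𝕜] H} (hS : IsSelfAdjoint S)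
    (hT : IsSelfAdjoint T) (h : S ∘L S = T ∘L ((1 - V ∘L adjoint V) ∘L T)) (x : H) :
    ‖S x‖ ^ 2 = ‖T x‖ ^ 2 - ‖adjoint V (T x)‖ ^ 2 := by
  rw [apply_norm_sq_eq_inner_adjoint_left, hS.adjoint_eq, h,
    ← re_inner_one_sub_comp_adjoint_apply_self, comp_apply, ← hT.adjoint_eq, adjoint_inner_left,
    hT.adjoint_eq]
  rfl

theorem range_eq_range_of_comp_self_eq {S T V : H →L[𝕜] H} (hS : IsSelfAdjoint S)
    (hT : IsSelfAdjoint T) (hV : ‖V‖ < 1) (h : S ∘L S = T ∘L ((1 - V ∘L adjoint V) ∘L T)) :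
    Set.range S = Set.range T := by
  have hnorm_sq := norm_sq_apply_eq_of_comp_self_eq hS hT h
  have hadj : ∀ y, ‖adjoint V y‖ ≤ ‖V‖ * ‖y‖ := fun y =>
    LinearIsometryEquiv.norm_map adjoint V ▸ (adjoint V).le_opNorm y
  set s := √(1 - ‖V‖ ^ 2)
  have hs : 0 < s := Real.sqrt_pos.mpr (by nlinarith [norm_nonneg V])
  have hs_sq : s ^ 2 = 1 - ‖V‖ ^ 2 := Real.sq_sqrt (by nlinarith [norm_nonneg V])
  apply (range_subset_range_of_norm_adjoint_le S T 1 fun x => ?_).antisymm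
    (range_subset_range_of_norm_adjoint_le T S s⁻¹ fun x => ?_)
  all_goals rw [hS.adjoint_eq, hT.adjoint_eq]
  · rw [one_mul, ← pow_le_pow_iff_left₀ (norm_nonneg _) (norm_nonneg _) two_ne_zero, hnorm_sq]
    nlinarith [sq_nonneg ‖adjoint V (T x)‖]
  · rw [inv_mul_eq_div, le_div_iff₀ hs, ← pow_le_pow_iff_left₀ (by positivity) (norm_nonneg _)
      two_ne_zero, mul_pow, hs_sq, hnorm_sq]
    nlinarith [hadj (T x), norm_nonneg (adjoint V (T x)), norm_nonneg V, norm_nonneg (T x)]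

end

theorem isomorphism_and_range_eq_of_norm_Vt_lt_one_general
    {H : Type*} [NormedAddCommGroup H] [InnerProductSpace ℝ H] [CompleteSpace H]
    (Vt QTmt QTmthalf QThalf : H →L[ℝ] H)
    (hnorm : ‖Vt‖ < 1)
    (hQTmthalf_sa : IsSelfAdjoint QTmthalf) (hQThalf_sa : IsSelfAdjoint QThalf)
    (hQTmthalf_sq : QTmthalf.comp QTmthalf = QTmt)
    (hrel : QTmt = QThalf.comp
      (((1 : H →L[ℝ] H) - Vt.comp (ContinuousLinearMap.adjoint Vt)).comp QThalf)) :
    (∃ W : H →L[ℝ] H,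
        ((1 : H →L[ℝ] H) - Vt.comp (ContinuousLinearMap.adjoint Vt)).comp W = 1 ∧
        W.comp ((1 : H →L[ℝ] H) - Vt.comp (ContinuousLinearMap.adjoint Vt)) = 1) ∧
      Set.range QTmthalf = Set.range QThalf := by
  let u := Units.oneSub _ (norm_comp_adjoint_lt_one hnorm)
  exact ⟨⟨↑u⁻¹, u.mul_inv, u.inv_mul⟩,
    range_eq_range_of_comp_self_eq hQTmthalf_sa hQThalf_sa hnorm (hQTmthalf_sq.trans hrel)⟩

/-- If `‖V_t‖ < 1`, then `I − V_t V_t^*` is an isomorphism of `H` and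
`im(Q_{T-t}^{1/2}) = im(Q_T^{1/2})`, where `Q_{T-t} = Q_T^{1/2}(I − V_t V_t^*)Q_T^{1/2}`. -/
theorem isomorphism_and_range_eq_of_norm_Vt_lt_one
    {H : Type*} [NormedAddCommGroup H] [InnerProductSpace ℝ H] [CompleteSpace H]
    (Vt QTmt QT QTmthalf QThalf : H →L[ℝ] H)
    (hnorm : ‖Vt‖ < 1)
    (hQTmthalf_sa : IsSelfAdjoint QTmthalf) (hQThalf_sa : IsSelfAdjoint QThalf)
    (hQTmthalf_sq : QTmthalf.comp QTmthalf = QTmt) (hQThalf_sq : QThalf.comp QThalf = QT)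
    (hrel : QTmt = QThalf.comp
      (((1 : H →L[ℝ] H) - Vt.comp (ContinuousLinearMap.adjoint Vt)).comp QThalf)) :
    (∃ W : H →L[ℝ] H,
        ((1 : H →L[ℝ] H) - Vt.comp (ContinuousLinearMap.adjoint Vt)).comp W = 1 ∧
        W.comp ((1 : H →L[ℝ] H) - Vt.comp (ContinuousLinearMap.adjoint Vt)) = 1) ∧
      Set.range QTmthalf = Set.range QThalf :=
  isomorphism_and_range_eq_of_norm_Vt_lt_one_general Vt QTmt QTmthalf QThalf hnorm hQTmthalf_sa
    hQThalf_sa hQTmthalf_sq hrel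
end

section
/- Let (X,Y) be a jointly Gaussian random vector in H₁ × H₂ with means m_X, m_Y, covariances C_X, C_Y, and cross-covariance C_{YX}, where C_X is injective. Then im(C_{YX}) ⊆ im(C_X^{1/2}), and the operator T = C_X^{-1/2} C_{YX} : H₁ → H₂ is Hilbert–Schmidt. -/
open ContinuousLinearMap
open scoped RealInnerProductSpace

/-!
By Cauchy–Schwarz, `C_X^{1/2} h ↦ ⟪C_{YX} k, h⟫` is a functional on the range of `C_X^{1/2}` of
norm at most `√⟪C_Y k, k⟫`. Extending it by Hahn–Banach and representing it by Riesz gives `w`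
with `C_X^{1/2} w = C_{YX} k` and `‖w‖² ≤ ⟪C_Y k, k⟫` (Douglas' factorization). Injectivity of
`C_X^{1/2}` makes `T k := w` linear, and `‖T k‖² ≤ ⟪C_Y k, k⟫` turns the trace-class property of
`C_Y` into the Hilbert–Schmidt property of `T`.
-/

theorem LinearMap.exists_comp_eq_of_injective_of_range_subset {R M N P : Type*} [Semiring R]
    [AddCommMonoid M] [AddCommMonoid N] [AddCommMonoid P] [Module R M] [Module R N] [Module R P]
    {f : M →ₗ[R] N} (hf : Function.Injective f) {g : P →ₗ[R] N} (h : Set.range g ⊆ Set.range f) :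
    ∃ T : P →ₗ[R] M, f ∘ₗ T = g :=
  ⟨(LinearEquiv.ofInjective f hf).symm ∘ₗ g.codRestrict (range f) fun x => h ⟨x, rfl⟩, by
    ext x
    exact congrArg Subtype.val ((LinearEquiv.ofInjective f hf).apply_symm_apply _)⟩

theorem ContinuousLinearMap.exists_adjoint_apply_eq_of_abs_inner_le
    {E F : Type*} [NormedAddCommGroup E] [InnerProductSpace ℝ E] [CompleteSpace E]
    [NormedAddCommGroup F] [InnerProductSpace ℝ F] [CompleteSpace F]
    (A : E →L[ℝ] F) {y : E} {c : ℝ} (hc : 0 ≤ c) (h : ∀ x, |⟪y, x⟫| ≤ c * ‖A x‖) :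
    ∃ w : F, adjoint A w = y ∧ ‖w‖ ≤ c := by
  have hker : LinearMap.ker (A : E →ₗ[ℝ] F) ≤ LinearMap.ker (innerₛₗ ℝ y) := fun x hx => by
    simpa [show A x = 0 from hx] using h x
  -- `A x ↦ ⟪y, x⟫`, well defined on `range A` through `E ⧸ ker A ≃ range A`
  set f : LinearMap.range (A : E →ₗ[ℝ] F) →ₗ[ℝ] ℝ :=
    (LinearMap.ker (A : E →ₗ[ℝ] F)).liftQ _ hker ∘ₗ (A : E →ₗ[ℝ] F).quotKerEquivRange.symm
  have hf : ∀ x, f ⟨A x, x, rfl⟩ = ⟪y, x⟫ := fun x =>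
    congrArg ((LinearMap.ker _).liftQ _ hker)
      ((A : E →ₗ[ℝ] F).quotKerEquivRange_symm_apply_image x _)
  have hf_bound : ∀ z, ‖f z‖ ≤ c * ‖z‖ := by
    rintro ⟨_, x, rfl⟩
    exact (hf x).symm ▸ h x
  obtain ⟨g, hg, hg_norm⟩ := exists_extension_norm_eq _ (f.mkContinuous c hf_bound)
  refine ⟨(InnerProductSpace.toDual ℝ F).symm g, ext_inner_right ℝ fun x => ?_, ?_⟩
  · rw [adjoint_inner_left, InnerProductSpace.toDual_symm_apply, ← hf]
    exact hg ⟨A x, x, rfl⟩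
  · rw [LinearIsometryEquiv.norm_map, hg_norm]
    exact f.mkContinuous_norm_le hc hf_bound

theorem norm_le_sqrt_opNorm_mul_of_sq_le_inner {E G : Type*} [NormedAddCommGroup E]
    [NormedAddCommGroup G] [InnerProductSpace ℝ G] {S : G →L[ℝ] G} {x : E} {k : G}
    (h : ‖x‖ ^ 2 ≤ ⟪S k, k⟫) : ‖x‖ ≤ √‖S‖ * ‖k‖ := by
  have hS : ⟪S k, k⟫ ≤ ‖S‖ * ‖k‖ ^ 2 :=
    calc ⟪S k, k⟫ ≤ ‖S k‖ * ‖k‖ := real_inner_le_norm _ _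
      _ ≤ ‖S‖ * ‖k‖ * ‖k‖ := by gcongr; exact S.le_opNorm k
      _ = ‖S‖ * ‖k‖ ^ 2 := by ring
  calc ‖x‖ ≤ √(‖S‖ * ‖k‖ ^ 2) := Real.le_sqrt_of_sq_le (h.trans hS)
    _ = √‖S‖ * ‖k‖ := by rw [Real.sqrt_mul (norm_nonneg _), Real.sqrt_sq (norm_nonneg _)]

theorem cross_covariance_range_and_hilbertSchmidt_general
    {H₁ H₂ : Type*} [NormedAddCommGroup H₁] [InnerProductSpace ℝ H₁] [CompleteSpace H₁]
    [NormedAddCommGroup H₂] [InnerProductSpace ℝ H₂] [CompleteSpace H₂]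
    (CX CXhalf : H₁ →L[ℝ] H₁) (CY : H₂ →L[ℝ] H₂) (CYX : H₂ →L[ℝ] H₁)
    (hCXhalf_sa : IsSelfAdjoint CXhalf)
    (hCXhalf_sq : CXhalf.comp CXhalf = CX)
    (hCX_inj : Function.Injective CX)
    (hCY_pos : ∀ k : H₂, 0 ≤ ⟪CY k, k⟫)
    (hCY_trace : ∀ bY : HilbertBasis ℕ ℝ H₂, Summable fun n => ⟪CY (bY n), bY n⟫)
    (hCS : ∀ (k : H₂) (h : H₁), ⟪CYX k, h⟫ ^ 2 ≤ ⟪CY k, k⟫ * ⟪CX h, h⟫) :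
    Set.range CYX ⊆ Set.range CXhalf ∧
      ∃ T : H₂ →L[ℝ] H₁, CXhalf.comp T = CYX ∧
        ∀ bY : HilbertBasis ℕ ℝ H₂, Summable fun n => ‖T (bY n)‖ ^ 2 := by
  have hinj : Function.Injective CXhalf := by
    rw [← hCXhalf_sq, coe_comp] at hCX_inj
    exact hCX_inj.of_comp
  have hCX_inner : ∀ h, ⟪CX h, h⟫ = ‖CXhalf h‖ ^ 2 := fun h => by
    rw [apply_norm_sq_eq_inner_adjoint_left, hCXhalf_sa.adjoint_eq, hCXhalf_sq, RCLike.re_to_real]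
  have hbound : ∀ k h, |⟪CYX k, h⟫| ≤ √⟪CY k, k⟫ * ‖CXhalf h‖ := fun k h => by
    rw [← Real.sqrt_sq (norm_nonneg (CXhalf h)), ← Real.sqrt_mul' _ (sq_nonneg _), ← hCX_inner,
      ← Real.sqrt_sq_eq_abs]
    exact Real.sqrt_le_sqrt (hCS k h)
  have hpre : ∀ k, ∃ w, CXhalf w = CYX k ∧ ‖w‖ ^ 2 ≤ ⟪CY k, k⟫ := fun k => by
    obtain ⟨w, hw, hw_norm⟩ :=
      CXhalf.exists_adjoint_apply_eq_of_abs_inner_le (Real.sqrt_nonneg _) (hbound k)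
    rw [hCXhalf_sa.adjoint_eq] at hw
    exact ⟨w, hw, (Real.le_sqrt (norm_nonneg w) (hCY_pos k)).mp hw_norm⟩
  have hrange : Set.range CYX ⊆ Set.range CXhalf := by
    rintro _ ⟨k, rfl⟩
    obtain ⟨w, hw, -⟩ := hpre k
    exact ⟨w, hw⟩
  obtain ⟨T, hT⟩ := LinearMap.exists_comp_eq_of_injective_of_range_subset
    (f := (CXhalf : H₁ →ₗ[ℝ] H₁)) (g := (CYX : H₂ →ₗ[ℝ] H₁)) hinj hrange
  have hT_norm : ∀ k, ‖T k‖ ^ 2 ≤ ⟪CY k, k⟫ := fun k => by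
    obtain ⟨w, hw, hw_norm⟩ := hpre k
    rwa [hinj (hw.trans (LinearMap.congr_fun hT k).symm)] at hw_norm
  refine ⟨hrange, T.mkContinuous √‖CY‖ fun k => norm_le_sqrt_opNorm_mul_of_sq_le_inner (hT_norm k),
    ?_, fun bY => ?_⟩
  · ext k
    exact LinearMap.congr_fun hT k
  · exact .of_nonneg_of_le (fun n => sq_nonneg _) (fun n => hT_norm (bY n)) (hCY_trace bY)

/-- For a jointly Gaussian vector `(X,Y)` in `H₁ × H₂` with injective covariance `C_X`,
trace-class covariance `C_Y` and cross-covariance `C_{YX} : H₂ → H₁` (satisfying the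
Cauchy–Schwarz inequality `⟨C_{YX} k, h⟩² ≤ ⟨C_Y k, k⟩ ⟨C_X h, h⟩`), one has
`im(C_{YX}) ⊆ im(C_X^{1/2})` and the operator `T = C_X^{-1/2} C_{YX}` is Hilbert–Schmidt. -/
theorem cross_covariance_range_and_hilbertSchmidt
    {H₁ H₂ : Type*} [NormedAddCommGroup H₁] [InnerProductSpace ℝ H₁] [CompleteSpace H₁]
    [NormedAddCommGroup H₂] [InnerProductSpace ℝ H₂] [CompleteSpace H₂]
    (CX CXhalf : H₁ →L[ℝ] H₁) (CY : H₂ →L[ℝ] H₂) (CYX : H₂ →L[ℝ] H₁)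
    (hCX_sa : IsSelfAdjoint CX) (hCXhalf_sa : IsSelfAdjoint CXhalf)
    (hCXhalf_sq : CXhalf.comp CXhalf = CX)
    (hCX_inj : Function.Injective CX)
    (hCY_sa : IsSelfAdjoint CY) (hCY_pos : ∀ k : H₂, 0 ≤ ⟪CY k, k⟫)
    (hCY_trace : ∀ bY : HilbertBasis ℕ ℝ H₂, Summable fun n => ⟪CY (bY n), bY n⟫)
    (hCS : ∀ (k : H₂) (h : H₁), ⟪CYX k, h⟫ ^ 2 ≤ ⟪CY k, k⟫ * ⟪CX h, h⟫) :
    Set.range CYX ⊆ Set.range CXhalf ∧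
      ∃ T : H₂ →L[ℝ] H₁, CXhalf.comp T = CYX ∧
        ∀ bY : HilbertBasis ℕ ℝ H₂, Summable fun n => ‖T (bY n)‖ ^ 2 :=
  cross_covariance_range_and_hilbertSchmidt_general CX CXhalf CY CYX hCXhalf_sa hCXhalf_sq hCX_inj
    hCY_pos hCY_trace hCS
end

section
/- The operator B defined on im(Q_T^{1/2}) by (Bx)(t) = Q^{1/2} S_{T-t}^* Q_T^{-1/2} x extends to a bounded operator B : H → L²(0,T;H) which is an isometry: ‖Bx‖_{L²(0,T;H)} = |x|_H for all x ∈ H. -/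
open MeasureTheory ContinuousLinearMap
open scoped RealInnerProductSpace

/-!
After the substitution `t ↦ T - t`, the squared `L²` norm of `t ↦ Q^{1/2} S_{T-t}^* y` is
`∫₀ᵀ |Q^{1/2} S_t^* y|² dt = ⟨Q_T y, y⟩ = |Q_T^{1/2} y|²`. So `Q_T^{1/2} y ↦ Q^{1/2} S_{T-·}^* y`
is norm preserving on the dense range of `Q_T^{1/2}`, and extends by continuity to an isometry
`H → L²(0,T;H)`.
-/

section
variable {𝕜 E F Eₗ : Type*} [NormedField 𝕜] [AddCommGroup E] [Module 𝕜 E]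
  [SeminormedAddCommGroup Eₗ] [NormedSpace 𝕜 Eₗ] [NormedAddCommGroup F] [NormedSpace 𝕜 F]
  [CompleteSpace F]

theorem LinearMap.exists_linearIsometry_extend {f : E →ₗ[𝕜] F} {e : E →ₗ[𝕜] Eₗ}
    (h_dense : DenseRange e) (h_norm : ∀ x, ‖f x‖ = ‖e x‖) :
    ∃ B : Eₗ →ₗᵢ[𝕜] F, ∀ x, B (e x) = f x := by
  have h_bound : ∃ C, ∀ x, ‖f x‖ ≤ C * ‖e x‖ := ⟨1, fun x => by rw [h_norm, one_mul]⟩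
  have h_eq : ∀ x, f.extendOfNorm e (e x) = f x := LinearMap.extendOfNorm_eq h_dense h_bound
  refine ⟨⟨(f.extendOfNorm e).toLinearMap, fun y => ?_⟩, h_eq⟩
  refine h_dense.induction_on y ?_ (fun x => ?_)
  · exact isClosed_eq (by fun_prop) continuous_norm
  · simp [h_eq, h_norm]
end

section
variable {α 𝕜 E F : Type*} [MeasurableSpace α] {μ : Measure α} {p : ENNReal}
  [NormedField 𝕜] [AddCommGroup E] [Module 𝕜 E] [NormedAddCommGroup F] [NormedSpace 𝕜 F]

def MeasureTheory.MemLp.toLpLinearMap (C : α → E →ₗ[𝕜] F)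
    (hC : ∀ y, MemLp (fun s => C s y) p μ) :
    E →ₗ[𝕜] Lp F p μ where
  toFun y := (hC y).toLp _
  map_add' y z := by
    rw [← MemLp.toLp_add]
    exact MemLp.toLp_congr _ _ (.of_forall fun s => map_add (C s) y z)
  map_smul' c y := by
    rw [RingHom.id_apply, ← MemLp.toLp_const_smul]
    exact MemLp.toLp_congr _ _ (.of_forall fun s => map_smul (C s) c y)

end

theorem MeasureTheory.MemLp.norm_toLp_sq {α F : Type*} [MeasurableSpace α] {μ : Measure α}
    [NormedAddCommGroup F] [InnerProductSpace ℝ F] {f : α → F} (hf : MemLp f 2 μ) :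
    ‖hf.toLp f‖ ^ 2 = ∫ s, ‖f s‖ ^ 2 ∂μ := by
  rw [← real_inner_self_eq_norm_sq, L2.inner_def]
  refine integral_congr_ae ?_
  filter_upwards [hf.coeFn_toLp] with s hs
  rw [hs, real_inner_self_eq_norm_sq]

theorem setIntegral_Ioo_comp_add_sub {E : Type*} [NormedAddCommGroup E] [NormedSpace ℝ E]
    (g : ℝ → E) (a b : ℝ) :
    ∫ s in Set.Ioo a b, g (a + b - s) = ∫ s in Set.Ioo a b, g s := by
  have h_pre : (fun s => a + b - s) ⁻¹' Set.Ioo a b = Set.Ioo a b := by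
    ext s
    simp only [Set.mem_preimage, Set.mem_Ioo]
    constructor <;> intro h <;> constructor <;> linarith [h.1, h.2]
  conv_lhs => rw [← h_pre]
  exact (Measure.measurePreserving_sub_left volume (a + b)).setIntegral_preimage_emb
    (MeasurableEquiv.subLeft (a + b)).measurableEmbedding g _

theorem IsSelfAdjoint.inner_comp_self_apply_self {H : Type*} [NormedAddCommGroup H]
    [InnerProductSpace ℝ H] [CompleteSpace H]
    {A : H →L[ℝ] H} (hA : IsSelfAdjoint A) (y : H) : ⟪(A ∘L A) y, y⟫ = ‖A y‖ ^ 2 := by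
  rw [apply_norm_sq_eq_inner_adjoint_left, hA.adjoint_eq]
  rfl

theorem B_extends_to_isometry_general
    {H : Type*} [NormedAddCommGroup H] [InnerProductSpace ℝ H] [CompleteSpace H]
    {T : ℝ}
    (S : ℝ → H →L[ℝ] H) (Qsqrt QT QThalf : H →L[ℝ] H)
    (hQThalf_sa : IsSelfAdjoint QThalf) (hQThalf_sq : QThalf.comp QThalf = QT)
    (hQThalf_dense : DenseRange QThalf)
    (hQTdef : ∀ y : H, ⟪QT y, y⟫ =
      ∫ s in Set.Ioo (0:ℝ) T, ‖Qsqrt ((ContinuousLinearMap.adjoint (S s)) y)‖ ^ 2)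
    (hmem : ∀ y : H, MemLp (fun s => Qsqrt ((ContinuousLinearMap.adjoint (S (T - s))) y)) 2
      (MeasureTheory.volume.restrict (Set.Ioo (0:ℝ) T))) :
    ∃ B : H →ₗᵢ[ℝ] (Lp H 2 (MeasureTheory.volume.restrict (Set.Ioo (0:ℝ) T))),
      ∀ y : H, (B (QThalf y) : ℝ → H)
        =ᵐ[MeasureTheory.volume.restrict (Set.Ioo (0:ℝ) T)]
          fun s => Qsqrt ((ContinuousLinearMap.adjoint (S (T - s))) y) := by
  let L := MemLp.toLpLinearMap (fun s => (Qsqrt ∘L adjoint (S (T - s))).toLinearMap) hmem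
  have h_norm : ∀ y, ‖L y‖ = ‖QThalf y‖ := fun y => by
    refine (sq_eq_sq₀ (norm_nonneg _) (norm_nonneg _)).mp ?_
    calc ‖L y‖ ^ 2 = ∫ s in Set.Ioo 0 T, ‖Qsqrt (adjoint (S (T - s)) y)‖ ^ 2 :=
          (hmem y).norm_toLp_sq
      _ = ∫ s in Set.Ioo 0 T, ‖Qsqrt (adjoint (S s) y)‖ ^ 2 := by
          simpa using setIntegral_Ioo_comp_add_sub (fun s => ‖Qsqrt (adjoint (S s) y)‖ ^ 2) 0 T
      _ = ‖QThalf y‖ ^ 2 := by rw [← hQTdef, ← hQThalf_sq, hQThalf_sa.inner_comp_self_apply_self]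
  obtain ⟨B, hB⟩ := L.exists_linearIsometry_extend (e := QThalf.toLinearMap) hQThalf_dense h_norm
  exact ⟨B, fun y => (hB y).symm ▸ (hmem y).coeFn_toLp⟩

/-- The operator `B` defined on `im(Q_T^{1/2})` by `(B Q_T^{1/2} y)(t) = Q^{1/2} S_{T-t}^* y`
extends to a bounded (isometric) operator `B : H → L²(0,T;H)`:
`‖Bx‖_{L²(0,T;H)} = |x|_H` for all `x ∈ H`. -/
theorem B_extends_to_isometry
    {H : Type*} [NormedAddCommGroup H] [InnerProductSpace ℝ H] [CompleteSpace H]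
    [MeasurableSpace H] [BorelSpace H] [SecondCountableTopology H]
    {T : ℝ} (hT : 0 < T)
    (S : ℝ → H →L[ℝ] H) (Q Qsqrt QT QThalf : H →L[ℝ] H)
    (hQsqrt_sa : IsSelfAdjoint Qsqrt) (hQsqrt_sq : Qsqrt.comp Qsqrt = Q)
    (hQThalf_sa : IsSelfAdjoint QThalf) (hQThalf_sq : QThalf.comp QThalf = QT)
    (hQT_inj : Function.Injective QT) (hQThalf_dense : DenseRange QThalf)
    (hQTdef : ∀ y : H, ⟪QT y, y⟫ =
      ∫ s in Set.Ioo (0:ℝ) T, ‖Qsqrt ((ContinuousLinearMap.adjoint (S s)) y)‖ ^ 2)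
    (hmem : ∀ y : H, MemLp (fun s => Qsqrt ((ContinuousLinearMap.adjoint (S (T - s))) y)) 2
      (MeasureTheory.volume.restrict (Set.Ioo (0:ℝ) T))) :
    ∃ B : H →ₗᵢ[ℝ] (Lp H 2 (MeasureTheory.volume.restrict (Set.Ioo (0:ℝ) T))),
      ∀ y : H, (B (QThalf y) : ℝ → H)
        =ᵐ[MeasureTheory.volume.restrict (Set.Ioo (0:ℝ) T)]
          fun s => Qsqrt ((ContinuousLinearMap.adjoint (S (T - s))) y) :=
  B_extends_to_isometry_general S Qsqrt QT QThalf hQThalf_sa hQThalf_sq hQThalf_dense hQTdef hmem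
end

section
/- For s < T, the operator T_s = Q_{T-s}^{-1/2} S_{T-s} Q̂_s S_{T-s}^* Q_{T-s}^{-1/2} satisfies the identity T_s = I − Q_{T-s}^{1/2} Q_T^{-1} Q_{T-s}^{1/2}; in particular T_s is bounded with 0 ≤ T_s ≤ I. -/
/-!
Work in the star ring `H →L[ℝ] H`, with `P = V V*` and `R = J J*`. Conjugating `P + R` by
`Q_T^{1/2}` gives `S Q_s S* + Q_{T-s} = Q_T`, so `P + R = 1`. Conjugating `T_s` by `Q_{T-s}^{1/2}`
gives `S Q̂_s S* = Q_T^{1/2} (P - P²) Q_T^{1/2}`, while conjugating `1 - J* J` gives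
`Q_T^{1/2} (R - R²) Q_T^{1/2}`; these agree because `P = 1 - R`. The conjugations can be undone
since a self-adjoint injective operator is cancellable on both sides (take adjoints for the right).
-/

open ContinuousLinearMap

theorem IsSelfAdjoint.isRegular_of_isLeftRegular {R : Type*} [Mul R] [StarMul R] {c : R}
    (hc : IsSelfAdjoint c) (h : IsLeftRegular c) : IsRegular c :=
  ⟨h, hc.star_eq ▸ h.star⟩

theorem ContinuousLinearMap.isLeftRegular_of_injective {R M : Type*} [Semiring R]
    [TopologicalSpace M] [AddCommMonoid M] [Module R M] {f : M →L[R] M}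
    (hf : Function.Injective f) : IsLeftRegular f :=
  fun _ _ h => ext fun x => hf (DFunLike.congr_fun h x)

section StarRing

variable {R : Type*}

theorem IsRegular.eq_of_mul_mul_eq_mul_mul [Mul R] {c a b : R} (hc : IsRegular c)
    (h : c * a * c = c * b * c) : a = b :=
  hc.left (hc.right h)

variable [Ring R] [StarRing R]

theorem mul_star_add_mul_star_eq_one {c v j x y : R} (hc : IsRegular c) (hc_sa : IsSelfAdjoint c)
    (hv : c * v = x) (hj : c * j = y) (h : c * c = x * star x + y * star y) :
    v * star v + j * star j = 1 := by
  refine hc.eq_of_mul_mul_eq_mul_mul ?_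
  subst hv hj
  rw [mul_one, h]
  simp only [star_mul, hc_sa.star_eq]
  noncomm_ring

theorem mul_star_eq_one_sub_star_mul {b c v j m x y : R} (hb : IsRegular b)
    (hb_sa : IsSelfAdjoint b) (hc_sa : IsSelfAdjoint c)
    (hv : c * v = x) (hj : c * j = b) (hm : b * m = y)
    (hy : y * star y = x * star x - x * star v * v * star x)
    (hvj : v * star v + j * star j = 1) :
    m * star m = 1 - star j * j := by
  have hp : v * star v = 1 - j * star j := eq_sub_of_add_eq hvj
  have hb' : b = star j * c := by rw [← hb_sa.star_eq, ← hj, star_mul, hc_sa.star_eq]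
  refine hb.eq_of_mul_mul_eq_mul_mul ?_
  calc b * (m * star m) * b = y * star y := by
        rw [← hm, star_mul, hb_sa.star_eq]; noncomm_ring
    _ = c * (v * star v - v * star v * (v * star v)) * c := by
        rw [hy, ← hv, star_mul, hc_sa.star_eq]; noncomm_ring
    _ = c * j * (star j * c) - c * j * (star j * j) * (star j * c) := by
        rw [hp]; noncomm_ring
    _ = b * (1 - star j * j) * b := by
        rw [hj, ← hb']; noncomm_ring

end StarRing

theorem Ts_identity_general
    {H : Type*} [NormedAddCommGroup H] [InnerProductSpace ℝ H] [CompleteSpace H]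
    {s T : ℝ}
    (Sop : ℝ → H →L[ℝ] H)
    (Qs QTms QT Qshalf QTmshalf QThalf Vs Qhat Qhathalf M J : H →L[ℝ] H)
    (hQshalf_sa : IsSelfAdjoint Qshalf) (hQTmshalf_sa : IsSelfAdjoint QTmshalf)
    (hQThalf_sa : IsSelfAdjoint QThalf) (hQhathalf_sa : IsSelfAdjoint Qhathalf)
    (hQshalf_sq : Qshalf.comp Qshalf = Qs) (hQTmshalf_sq : QTmshalf.comp QTmshalf = QTms)
    (hQThalf_sq : QThalf.comp QThalf = QT) (hQhathalf_sq : Qhathalf.comp Qhathalf = Qhat)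
    (hVs : QThalf.comp Vs = (Sop (T - s)).comp Qshalf)
    (hQhat : Qhat = Qs - (Qshalf.comp ((ContinuousLinearMap.adjoint Vs).comp Vs)).comp Qshalf)
    (hid : QT = QTms + (Sop (T - s)).comp (Qs.comp (ContinuousLinearMap.adjoint (Sop (T - s)))))
    (hM : QTmshalf.comp M = (Sop (T - s)).comp Qhathalf)
    (hJ : QThalf.comp J = QTmshalf)
    (hQTmshalf_inj : Function.Injective QTmshalf)
    (hQThalf_inj : Function.Injective QThalf) :
    M.comp (ContinuousLinearMap.adjoint M) =
        (1 : H →L[ℝ] H) - (ContinuousLinearMap.adjoint J).comp J ∧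
      (M.comp (ContinuousLinearMap.adjoint M)).IsPositive ∧
      ((1 : H →L[ℝ] H) - M.comp (ContinuousLinearMap.adjoint M)).IsPositive := by
  simp only [← star_eq_adjoint, ← mul_def] at *
  subst hQshalf_sq hQTmshalf_sq hQThalf_sq hQhathalf_sq
  set S := Sop (T - s)
  have hB := hQTmshalf_sa.isRegular_of_isLeftRegular (isLeftRegular_of_injective hQTmshalf_inj)
  have hC := hQThalf_sa.isRegular_of_isLeftRegular (isLeftRegular_of_injective hQThalf_inj)
  have hsum := mul_star_add_mul_star_eq_one hC hQThalf_sa hVs hJ (by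
    rw [hid, add_comm]
    simp only [star_mul, hQshalf_sa.star_eq, hQTmshalf_sa.star_eq]
    noncomm_ring)
  have hMM := mul_star_eq_one_sub_star_mul hB hQTmshalf_sa hQThalf_sa hVs hJ hM (by
    rw [star_mul, hQhathalf_sa.star_eq, ← mul_assoc, mul_assoc S, hQhat]
    simp only [star_mul, hQshalf_sa.star_eq]
    noncomm_ring) hsum
  refine ⟨hMM, isPositive_self_comp_adjoint M, ?_⟩
  rw [hMM, sub_sub_cancel]
  exact isPositive_adjoint_comp_self J

/-- For `s < T`, the operator `T_s = Q_{T-s}^{-1/2} S_{T-s} Q̂_s S_{T-s}^* Q_{T-s}^{-1/2}`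
satisfies `T_s = I − Q_{T-s}^{1/2} Q_T^{-1} Q_{T-s}^{1/2}`; in particular `0 ≤ T_s ≤ I`.
Here `T_s = M M^*` with `M = Q_{T-s}^{-1/2} S_{T-s} Q̂_s^{1/2}` and
`Q_{T-s}^{1/2} Q_T^{-1} Q_{T-s}^{1/2} = J^* J` with `J = Q_T^{-1/2} Q_{T-s}^{1/2}`. -/
theorem Ts_identity
    {H : Type*} [NormedAddCommGroup H] [InnerProductSpace ℝ H] [CompleteSpace H]
    {s T : ℝ} (hs : 0 ≤ s) (hsT : s < T)
    (Sop : ℝ → H →L[ℝ] H)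
    (Qs QTms QT Qshalf QTmshalf QThalf Vs Qhat Qhathalf M J : H →L[ℝ] H)
    (hQshalf_sa : IsSelfAdjoint Qshalf) (hQTmshalf_sa : IsSelfAdjoint QTmshalf)
    (hQThalf_sa : IsSelfAdjoint QThalf) (hQhathalf_sa : IsSelfAdjoint Qhathalf)
    (hQshalf_sq : Qshalf.comp Qshalf = Qs) (hQTmshalf_sq : QTmshalf.comp QTmshalf = QTms)
    (hQThalf_sq : QThalf.comp QThalf = QT) (hQhathalf_sq : Qhathalf.comp Qhathalf = Qhat)
    (hVs : QThalf.comp Vs = (Sop (T - s)).comp Qshalf)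
    (hQhat : Qhat = Qs - (Qshalf.comp ((ContinuousLinearMap.adjoint Vs).comp Vs)).comp Qshalf)
    (hid : QT = QTms + (Sop (T - s)).comp (Qs.comp (ContinuousLinearMap.adjoint (Sop (T - s)))))
    (hM : QTmshalf.comp M = (Sop (T - s)).comp Qhathalf)
    (hJ : QThalf.comp J = QTmshalf)
    (hQTmshalf_inj : Function.Injective QTmshalf)
    (hQThalf_inj : Function.Injective QThalf) :
    M.comp (ContinuousLinearMap.adjoint M) =
        (1 : H →L[ℝ] H) - (ContinuousLinearMap.adjoint J).comp J ∧
      (M.comp (ContinuousLinearMap.adjoint M)).IsPositive ∧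
      ((1 : H →L[ℝ] H) - M.comp (ContinuousLinearMap.adjoint M)).IsPositive :=
  Ts_identity_general Sop Qs QTms QT Qshalf QTmshalf QThalf Vs Qhat Qhathalf M J hQshalf_sa
    hQTmshalf_sa hQThalf_sa hQhathalf_sa hQshalf_sq hQTmshalf_sq hQThalf_sq hQhathalf_sq hVs hQhat
    hid hM hJ hQTmshalf_inj hQThalf_inj
end
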